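/- arXiv:1601.00385 — 2 statements merged into one kernel-verified Lean document; each statement's English description precedes it below -/
import Mathlib

section
/- Row insertion is invertible: if T is a semistandard Young tableau of shape ρ and x a positive integer, then applying reverse row insertion to T ← x starting from the unique box of (T ← x) not in ρ recovers the pair (T, x). -/
/-- The number of cells of `T` containing the value `v` (entries are 0-indexed). -/
def contentCount (μ : YoungDiagram) (T : SemistandardYoungTableau μ) (v : ℕ) : ℕ :=
  (μ.cells.filter (fun c => T c.1 c.2 = v)).card

/-- `T` has content `lam`: the value `v` occurs `lam v` times (0-indexed), for every `v`. -/
def HasContent {μ : YoungDiagram} (T : SemistandardYoungTableau μ) (lam : List ℕ) : Prop :=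
  ∀ v, contentCount μ T v = lam.getD v 0

/-- The Kostka number `K(μ, lam)`: the number of SSYT of shape `μ` and content `lam`. -/
noncomputable def Kostka (μ : YoungDiagram) (lam : List ℕ) : ℕ :=
  Nat.card {T : SemistandardYoungTableau μ // HasContent T lam}

/-- `l` is a partition (written as a list): non-increasing with positive entries. -/
def IsPartitionList (l : List ℕ) : Prop := l.Pairwise (· ≥ ·) ∧ ∀ x ∈ l, 0 < x

/-- `λ^{(i)}` (0-indexed): decrease the `i`-th entry of `l` by one. -/
def decAt (l : List ℕ) (i : ℕ) : List ℕ := l.set i (l.getD i 0 - 1)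
/-- One pass of RSK row bumping on raw entry functions.  `bumpEntries rowLen fuel i y T`
inserts `y` into row `i` of the entry function `T` (whose row lengths are given by `rowLen`),
bumping entries down row by row; it returns the new entry function together with the
coordinates of the newly created box. -/
def bumpEntries (rowLen : ℕ → ℕ) : ℕ → ℕ → ℕ → (ℕ → ℕ → ℕ) → ((ℕ → ℕ → ℕ) × (ℕ × ℕ))
  | 0, i, y, T => ((fun p q => if p = i ∧ q = rowLen i then y else T p q), (i, rowLen i))
  | fuel + 1, i, y, T =>
    if h : ∃ j, j < rowLen i ∧ y < T i j then
      bumpEntries rowLen fuel (i + 1) (T i (Nat.find h))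
        (fun p q => if p = i ∧ q = Nat.find h then y else T p q)
    else ((fun p q => if p = i ∧ q = rowLen i then y else T p q), (i, rowLen i))

/-- RSK row insertion `T ← x`, returned as a raw entry function together with the
newly created box. -/
def rowInsert {μ : YoungDiagram} (T : SemistandardYoungTableau μ) (x : ℕ) :
    (ℕ → ℕ → ℕ) × (ℕ × ℕ) :=
  bumpEntries μ.rowLen (μ.colLen 0 + 1) 0 x (fun i j => T i j)

/-- One pass of reverse row bumping: `revBumpAux rowLen i y S` reverse-inserts `y` into
row `i` of `S` (replacing the rightmost entry smaller than `y`, which is bumped up into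
row `i - 1`, and so on), returning the new entry function and the finally ejected value. -/
def revBumpAux (rowLen : ℕ → ℕ) : ℕ → ℕ → (ℕ → ℕ → ℕ) → ((ℕ → ℕ → ℕ) × ℕ)
  | 0, y, S =>
    if _h : ∃ j, j < rowLen 0 ∧ S 0 j < y then
      let j := Nat.findGreatest (fun j => j < rowLen 0 ∧ S 0 j < y) (rowLen 0)
      ((fun p q => if p = 0 ∧ q = j then y else S p q), S 0 j)
    else (S, y)
  | i + 1, y, S =>
    if _h : ∃ j, j < rowLen (i + 1) ∧ S (i + 1) j < y then
      let j := Nat.findGreatest (fun j => j < rowLen (i + 1) ∧ S (i + 1) j < y) (rowLen (i + 1))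
      revBumpAux rowLen i (S (i + 1) j) (fun p q => if p = i + 1 ∧ q = j then y else S p q)
    else (S, y)

/-- Reverse row insertion starting at the box `(i, j)` of the raw entry function `S`:
the box is removed and its entry is reverse-bumped up through the rows above.
The result is the new entry function together with the ejected value. -/
def reverseInsert (rowLen : ℕ → ℕ) (S : ℕ → ℕ → ℕ) (i j : ℕ) : (ℕ → ℕ → ℕ) × ℕ :=
  match i with
  | 0 => ((fun p q => if p = 0 ∧ q = j then 0 else S p q), S 0 j)
  | i' + 1 => revBumpAux rowLen i' (S (i' + 1) j)
      (fun p q => if p = i' + 1 ∧ q = j then 0 else S p q)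

/-! Bumping in row `i` puts `y` on the leftmost entry greater than `y`. As the row is weakly
increasing, that box is also the rightmost one holding an entry smaller than the displaced
value, so reverse bumping puts the displaced value back there and carries `y` up one row.
Insertion ends by appending a box at the end of a row, where the tableau is `0`, so
clearing that box undoes the last step. -/

def setEntry (S : ℕ → ℕ → ℕ) (i j a : ℕ) : ℕ → ℕ → ℕ :=
  fun p q => if p = i ∧ q = j then a else S p q

section setEntry

variable (S : ℕ → ℕ → ℕ) (i j : ℕ)

@[simp]
lemma setEntry_apply_self (a : ℕ) : setEntry S i j a i j = a := by
  simp [setEntry]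

@[simp]
lemma setEntry_setEntry_self (a b : ℕ) : setEntry (setEntry S i j a) i j b = setEntry S i j b := by
  funext p q
  by_cases h : p = i ∧ q = j <;> simp [setEntry, h]

lemma setEntry_eq_self {a : ℕ} (h : S i j = a) : setEntry S i j a = S := by
  funext p q
  by_cases hpq : p = i ∧ q = j
  · obtain ⟨rfl, rfl⟩ := hpq
    simp [h]
  · simp [setEntry, hpq]

lemma setEntry_apply_of_ne_row (a : ℕ) {p : ℕ} (hp : p ≠ i) (q : ℕ) :
    setEntry S i j a p q = S p q := by
  simp [setEntry, hp]

end setEntry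

/-- What reverse insertion still has to do once it has carried `y` back up to row `i`. -/
def revBumpAbove (rowLen : ℕ → ℕ) : ℕ → ℕ → (ℕ → ℕ → ℕ) → (ℕ → ℕ → ℕ) × ℕ
  | 0, y, S => (S, y)
  | i + 1, y, S => revBumpAux rowLen i y S

section reverse

variable (rowLen : ℕ → ℕ) (S : ℕ → ℕ → ℕ) (i j : ℕ)

lemma reverseInsert_eq_revBumpAbove :
    reverseInsert rowLen S i j = revBumpAbove rowLen i (S i j) (setEntry S i j 0) := by
  cases i <;> rfl

lemma revBumpAux_eq_revBumpAbove {y : ℕ} (h : ∃ j, j < rowLen i ∧ S i j < y)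
    (hj : Nat.findGreatest (fun j => j < rowLen i ∧ S i j < y) (rowLen i) = j) :
    revBumpAux rowLen i y S = revBumpAbove rowLen i (S i j) (setEntry S i j y) := by
  subst hj
  cases i <;> simp only [revBumpAux, dif_pos h] <;> rfl

lemma reverseInsert_setEntry {y : ℕ} (hz : S i j = 0) :
    reverseInsert rowLen (setEntry S i j y) i j = revBumpAbove rowLen i y S := by
  rw [reverseInsert_eq_revBumpAbove, setEntry_apply_self, setEntry_setEntry_self,
    setEntry_eq_self S i j hz]

/-- The rightmost entry smaller than `S i j` is the `y` at column `j`, because the entries to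
the right of `j` are at least `S i j`. -/
lemma revBumpAux_setEntry {y : ℕ} (hj : j < rowLen i) (hy : y < S i j)
    (hrow : ∀ q, j < q → q < rowLen i → S i j ≤ S i q) :
    revBumpAux rowLen i (S i j) (setEntry S i j y) = revBumpAbove rowLen i y S := by
  have hfind : Nat.findGreatest (fun q => q < rowLen i ∧ setEntry S i j y i q < S i j)
      (rowLen i) = j := by
    refine Nat.findGreatest_eq_iff.mpr ⟨hj.le, fun _ => ⟨hj, by simpa using hy⟩, ?_⟩
    rintro q hjq hq ⟨hqlen, hlt⟩
    simp only [setEntry, hjq.ne', and_false, if_false] at hlt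
    exact (hrow q hjq hqlen).not_gt hlt
  rw [revBumpAux_eq_revBumpAbove rowLen _ i j ⟨j, hj, by simpa using hy⟩ hfind,
    setEntry_setEntry_self, setEntry_apply_self, setEntry_eq_self S i j rfl]

end reverse

lemma bumpEntries_box_eq_rowLen (rowLen : ℕ → ℕ) (fuel i y : ℕ) (S : ℕ → ℕ → ℕ) :
    (bumpEntries rowLen fuel i y S).2.2 = rowLen (bumpEntries rowLen fuel i y S).2.1 := by
  induction fuel generalizing i y S with
  | zero => rfl
  | succ fuel ih =>
    rw [bumpEntries]
    split
    · exact ih _ _ _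
    · rfl

lemma reverseInsert_setEntry_rowLen {ρ : YoungDiagram} (T : SemistandardYoungTableau ρ)
    (i y : ℕ) (S : ℕ → ℕ → ℕ) (hS : ∀ q, S i q = T i q) :
    reverseInsert ρ.rowLen (setEntry S i (ρ.rowLen i) y) i (ρ.rowLen i)
      = revBumpAbove ρ.rowLen i y S := by
  refine reverseInsert_setEntry _ _ _ _ ?_
  rw [hS]
  exact T.zeros (by simp [YoungDiagram.mem_iff_lt_rowLen])

lemma reverseInsert_bumpEntries {ρ : YoungDiagram} (T : SemistandardYoungTableau ρ)
    (fuel i y : ℕ) (S : ℕ → ℕ → ℕ) (hS : ∀ p q, i ≤ p → S p q = T p q) :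
    reverseInsert ρ.rowLen (bumpEntries ρ.rowLen fuel i y S).1
        (bumpEntries ρ.rowLen fuel i y S).2.1 (bumpEntries ρ.rowLen fuel i y S).2.2
      = revBumpAbove ρ.rowLen i y S := by
  induction fuel generalizing i y S with
  | zero => exact reverseInsert_setEntry_rowLen T i y S (hS i · le_rfl)
  | succ fuel ih =>
    rw [bumpEntries]
    split
    case isTrue h =>
      obtain ⟨hj, hy⟩ := Nat.find_spec h
      have hS' : ∀ p q, i + 1 ≤ p → setEntry S i (Nat.find h) y p q = T p q := fun p q hp => by
        rw [setEntry_apply_of_ne_row _ _ _ _ (by omega), hS p q (by omega)]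
      have hrow : ∀ q, Nat.find h < q → q < ρ.rowLen i → S i (Nat.find h) ≤ S i q := by
        intro q hjq hq
        rw [hS i _ le_rfl, hS i _ le_rfl]
        exact T.row_weak hjq (YoungDiagram.mem_iff_lt_rowLen.mpr hq)
      exact (ih _ _ _ hS').trans (revBumpAux_setEntry _ _ _ _ hj hy hrow)
    case isFalse => exact reverseInsert_setEntry_rowLen T i y S (hS i · le_rfl)

/-- **Row insertion is invertible.**  If `T` is a semistandard Young tableau of shape `ρ`
and `x` a value, then applying reverse row insertion to `T ← x`, starting from the unique
box of `T ← x` not in `ρ`, recovers the pair `(T, x)`. -/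
theorem reverseInsert_rowInsert (ρ : YoungDiagram) (T : SemistandardYoungTableau ρ) (x : ℕ) :
    (rowInsert T x).2 ∉ ρ ∧
    reverseInsert ρ.rowLen (rowInsert T x).1 (rowInsert T x).2.1 (rowInsert T x).2.2 =
      ((fun i j => T i j), x) := by
  refine ⟨fun hmem => ?_, reverseInsert_bumpEntries T _ 0 x _ fun _ _ _ => rfl⟩
  have hbox : (rowInsert T x).2.2 = ρ.rowLen (rowInsert T x).2.1 :=
    bumpEntries_box_eq_rowLen _ _ _ _ _
  exact (YoungDiagram.mem_iff_lt_rowLen.mp hmem).ne hbox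
end

section
/- For partitions ρ ⊢ n−1 and λ ⊢ n, the number of pairs (μ, T) with μ ⊢ n, ρ ⪯ μ, and T ∈ SSYT(μ, λ) equals the number of pairs (x, S) with 1 ≤ x ≤ length(λ), λ_x ≥ 1, and S ∈ SSYT(ρ, λ^{(x)}). -/
open Finset YoungDiagram

theorem getD_decAt (l : List ℕ) (i v : ℕ) :
    (decAt l i).getD v 0 = l.getD v 0 - if i = v then 1 else 0 := by
  unfold decAt
  split_ifs with h
  · subst h
    by_cases hi : i < l.length <;> simp [List.getD_eq_getElem?_getD, hi]
  · simp [List.getD_eq_getElem?_getD, List.getElem?_set_ne h]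

theorem forall_add_ite_eq_getD_iff {c : ℕ → ℕ} {l : List ℕ} {x : ℕ} :
    (∀ v, c v + (if x = v then 1 else 0) = l.getD v 0) ↔
      0 < l.getD x 0 ∧ ∀ v, c v = (decAt l x).getD v 0 := by
  simp only [getD_decAt]
  refine ⟨fun h => ⟨?_, fun v => by have := h v; omega⟩, fun ⟨hx, h⟩ v => ?_⟩
  · have := h x
    rw [if_pos rfl] at this
    omega
  · have := h v
    split_ifs at this ⊢ with hv
    · subst hv; omega
    · omega

theorem lt_length_of_getD_pos {l : List ℕ} {x : ℕ} (h : 0 < l.getD x 0) : x < l.length := by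
  by_contra hx
  simp [List.getD_eq_getElem?_getD, List.getElem?_eq_none (not_lt.1 hx)] at h

namespace YoungDiagram

variable {μ ρ : YoungDiagram}

/-- Row of the cell of `μ` outside `ρ`; meaningful when `μ` has exactly one such cell. -/
def addedRow (μ ρ : YoungDiagram) : ℕ := (μ.cells \ ρ.cells).sup Prod.fst

def addedCol (μ ρ : YoungDiagram) : ℕ := (μ.cells \ ρ.cells).sup Prod.snd

theorem addedRow_addedCol_of_cells_sdiff {c : ℕ × ℕ} (h : μ.cells \ ρ.cells = {c}) :
    (addedRow μ ρ, addedCol μ ρ) = c := by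
  simp [addedRow, addedCol, h]

section AddedCell

variable (hle : ρ ≤ μ) (hcard : μ.card = ρ.card + 1)
include hle hcard

theorem cells_sdiff_eq_singleton :
    μ.cells \ ρ.cells = {(addedRow μ ρ, addedCol μ ρ)} := by
  obtain ⟨c, hc⟩ := card_eq_one.1 <| by
    rw [card_sdiff_of_subset (cells_subset_iff.2 hle)]
    exact Nat.sub_eq_of_eq_add' hcard
  rw [hc, addedRow_addedCol_of_cells_sdiff hc]

theorem cells_eq_insert_added : μ.cells = insert (addedRow μ ρ, addedCol μ ρ) ρ.cells := by
  rw [insert_eq, ← cells_sdiff_eq_singleton hle hcard,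
    sdiff_union_of_subset (cells_subset_iff.2 hle)]

theorem mem_iff_mem_and_ne_added {c : ℕ × ℕ} :
    c ∈ ρ ↔ c ∈ μ ∧ c ≠ (addedRow μ ρ, addedCol μ ρ) := by
  have h := Finset.ext_iff.1 (cells_sdiff_eq_singleton hle hcard) c
  simp only [mem_sdiff, mem_cells, mem_singleton] at h
  exact ⟨fun hc => ⟨hle hc, fun he => (h.2 he).2 hc⟩,
    fun hc => not_not.1 fun h' => hc.2 (h.1 ⟨hc.1, h'⟩)⟩

theorem added_mem : (addedRow μ ρ, addedCol μ ρ) ∈ μ := by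
  have h := cells_sdiff_eq_singleton hle hcard ▸ mem_singleton_self _
  exact (mem_cells _).1 (mem_sdiff.1 h).1

theorem rowLen_addedRow : ρ.rowLen (addedRow μ ρ) = addedCol μ ρ := by
  set r := addedRow μ ρ
  refine le_antisymm (not_lt.1 fun h => ?_) (not_lt.1 fun h => ?_)
  · exact ((mem_iff_mem_and_ne_added hle hcard).1 (mem_iff_lt_rowLen.2 h)).2 rfl
  · have hmem : (r, ρ.rowLen r) ∈ ρ := (mem_iff_mem_and_ne_added hle hcard).2
      ⟨μ.up_left_mem le_rfl h.le (added_mem hle hcard), fun he => h.ne (congrArg Prod.snd he)⟩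
    exact (mem_iff_lt_rowLen.1 hmem).false

end AddedCell

end YoungDiagram

namespace SemistandardYoungTableau

theorem sigma_ext {p q : Σ μ, SemistandardYoungTableau μ} (h : p.1 = q.1)
    (h' : ∀ i j, p.2 i j = q.2 i j) : p = q := by
  obtain ⟨μ, T⟩ := p
  obtain ⟨ν, T'⟩ := q
  obtain rfl : μ = ν := h
  exact congrArg _ (SemistandardYoungTableau.ext h')

section RowInsertion

variable {ρ : YoungDiagram} (S : SemistandardYoungTableau ρ)

theorem exists_notMem_or_lt_entry (i v : ℕ) : ∃ j, (i, j) ∉ ρ ∨ v < S i j :=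
  ⟨ρ.rowLen i, Or.inl fun h => (mem_iff_lt_rowLen.1 h).false⟩

/-- The column at which `v` is placed when it is row-inserted into row `i`: the first entry
exceeding `v`, or the end of the row. -/
def insertPos (i v : ℕ) : ℕ := Nat.find (S.exists_notMem_or_lt_entry i v)

variable {S}

theorem insertPos_le_rowLen (i v : ℕ) : S.insertPos i v ≤ ρ.rowLen i :=
  Nat.find_min' _ (Or.inl fun h => (mem_iff_lt_rowLen.1 h).false)

theorem lt_entry_insertPos {i v : ℕ} (h : (i, S.insertPos i v) ∈ ρ) :
    v < S i (S.insertPos i v) :=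
  (Nat.find_spec (S.exists_notMem_or_lt_entry i v)).resolve_left (not_not.2 h)

theorem insertPos_le {i v j : ℕ} (h : v < S i j) : S.insertPos i v ≤ j :=
  Nat.find_min' _ (Or.inr h)

theorem le_insertPos_iff {i v k : ℕ} :
    k ≤ S.insertPos i v ↔ ∀ j < k, (i, j) ∈ ρ ∧ S i j ≤ v := by
  simp [insertPos]

theorem mem_and_entry_le_of_lt_insertPos {i v j : ℕ} (h : j < S.insertPos i v) :
    (i, j) ∈ ρ ∧ S i j ≤ v :=
  le_insertPos_iff.1 le_rfl j h

variable (S) (x : ℕ)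

/-- `S.bumpVal x i` is the value inserted into row `i` when `x` is row-inserted into `S`. -/
def bumpVal : ℕ → ℕ
  | 0 => x
  | i + 1 => S i (S.insertPos i (bumpVal i))

def bumpCol (i : ℕ) : ℕ := S.insertPos i (S.bumpVal x i)

theorem exists_bumpCol_notMem : ∃ i, (i, S.bumpCol x i) ∉ ρ := by
  refine ⟨ρ.colLen 0, fun h => ?_⟩
  have := ρ.colLen_anti 0 _ (Nat.zero_le (S.bumpCol x (ρ.colLen 0)))
  exact (mem_iff_lt_colLen.1 h).not_ge this

/-- Insertion ends in the first row where the bumped value lands past the end of the row. -/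
def stopRow : ℕ := Nat.find (S.exists_bumpCol_notMem x)

variable {S x}

theorem bumpVal_zero : S.bumpVal x 0 = x := rfl

theorem bumpVal_succ (i : ℕ) : S.bumpVal x (i + 1) = S i (S.bumpCol x i) := rfl

theorem bumpCol_mem {i : ℕ} (h : i < S.stopRow x) : (i, S.bumpCol x i) ∈ ρ :=
  not_not.1 (Nat.find_min (S.exists_bumpCol_notMem x) h)

theorem bumpCol_stopRow : S.bumpCol x (S.stopRow x) = ρ.rowLen (S.stopRow x) :=
  (insertPos_le_rowLen _ _).antisymm <| not_lt.1 fun h =>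
    Nat.find_spec (S.exists_bumpCol_notMem x) (mem_iff_lt_rowLen.2 h)

theorem bumpVal_lt_bumpVal_succ {i : ℕ} (h : i < S.stopRow x) :
    S.bumpVal x i < S.bumpVal x (i + 1) :=
  lt_entry_insertPos (bumpCol_mem h)

theorem bumpCol_succ_le (i : ℕ) : S.bumpCol x (i + 1) ≤ S.bumpCol x i := by
  by_cases hmem : (i + 1, S.bumpCol x i) ∈ ρ
  · exact insertPos_le (S.col_strict (Nat.lt_succ_self i) hmem)
  · exact (insertPos_le_rowLen _ _).trans
      (not_lt.1 (mt mem_iff_lt_rowLen.2 hmem))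

theorem strictMonoOn_bumpVal : StrictMonoOn (S.bumpVal x) (Set.Iic (S.stopRow x)) :=
  strictMonoOn_Iic_of_lt_succ fun _ h => bumpVal_lt_bumpVal_succ h

theorem antitone_bumpCol : Antitone (S.bumpCol x) :=
  antitone_nat_of_succ_le bumpCol_succ_le

theorem entry_lt_of_lt_stopRow {i j : ℕ} (hi : i < S.stopRow x) (hj : S.bumpCol x i ≤ j)
    (hmem : (i, j) ∈ ρ) : S.bumpVal x i < S i j :=
  (lt_entry_insertPos (bumpCol_mem hi)).trans_le (S.row_weak_of_le hj hmem)

theorem lt_bumpCol_of_mem_stopRow {j : ℕ} (h : (S.stopRow x, j) ∈ ρ) :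
    j < S.bumpCol x (S.stopRow x) :=
  bumpCol_stopRow (S := S) ▸ mem_iff_lt_rowLen.1 h

variable (S x)

def insertShape : YoungDiagram where
  cells := insert (S.stopRow x, S.bumpCol x (S.stopRow x)) ρ.cells
  isLowerSet := by
    rintro ⟨i, j⟩ ⟨i', j'⟩ ⟨hi, hj⟩ h
    simp only [coe_insert, Set.mem_insert_iff, Prod.mk.injEq, mem_coe,
      mem_cells] at h ⊢
    rcases h with ⟨rfl, rfl⟩ | h
    · rcases hi.lt_or_eq with hi | rfl
      · exact .inr (mem_iff_lt_rowLen.2 <| hj.trans_lt <|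
          (antitone_bumpCol hi.le).trans_lt (mem_iff_lt_rowLen.1 (bumpCol_mem hi)))
      · exact hj.eq_or_lt.imp (⟨rfl, ·⟩) fun hj => mem_iff_lt_rowLen.2
          (bumpCol_stopRow (S := S) ▸ hj)
    · exact .inr (ρ.up_left_mem hi hj h)

def insertEntry (i j : ℕ) : ℕ :=
  if i ≤ S.stopRow x ∧ j = S.bumpCol x i then S.bumpVal x i else S i j

variable {S x}

theorem mem_insertShape {i j : ℕ} :
    (i, j) ∈ S.insertShape x ↔ (i = S.stopRow x ∧ j = S.bumpCol x i) ∨ (i, j) ∈ ρ := by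
  change (i, j) ∈ insert _ ρ.cells ↔ _
  simp only [mem_insert, Prod.mk.injEq, mem_cells]
  constructor <;> rintro (⟨rfl, rfl⟩ | h) <;> simp_all

theorem le_insertShape : ρ ≤ S.insertShape x := fun _ hc => mem_insertShape.2 (.inr hc)

theorem mem_of_mem_insertShape {i j : ℕ} (h : (i, j) ∈ S.insertShape x)
    (hne : ¬(i ≤ S.stopRow x ∧ j = S.bumpCol x i)) : (i, j) ∈ ρ :=
  (mem_insertShape.1 h).resolve_left fun h' => hne ⟨h'.1.le, h'.2⟩

theorem mem_insertShape_of_le_stopRow {i : ℕ} (h : i ≤ S.stopRow x) :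
    (i, S.bumpCol x i) ∈ S.insertShape x :=
  mem_insertShape.2 <| h.lt_or_eq.symm.imp (⟨·, rfl⟩) bumpCol_mem

theorem card_insertShape : (S.insertShape x).card = ρ.card + 1 :=
  card_insert_of_notMem fun h =>
    (lt_bumpCol_of_mem_stopRow ((mem_cells _).1 h)).false

theorem insertEntry_row_weak {i j₁ j₂ : ℕ} (hj : j₁ < j₂) (h : (i, j₂) ∈ S.insertShape x) :
    S.insertEntry x i j₁ ≤ S.insertEntry x i j₂ := by
  unfold insertEntry
  by_cases h₂ : i ≤ S.stopRow x ∧ j₂ = S.bumpCol x i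
  · rw [if_pos h₂, if_neg (by omega)]
    exact (mem_and_entry_le_of_lt_insertPos (h₂.2 ▸ hj : j₁ < S.bumpCol x i)).2
  have hρ := mem_of_mem_insertShape h h₂
  rw [if_neg h₂]
  split_ifs with h₁
  · rcases h₁.1.lt_or_eq with hi | rfl
    · exact (entry_lt_of_lt_stopRow hi (by omega) hρ).le
    · exact absurd (lt_bumpCol_of_mem_stopRow hρ) (by omega)
  · exact S.row_weak hj hρ

theorem insertEntry_col_strict {i₁ i₂ j : ℕ} (hi : i₁ < i₂) (h : (i₂, j) ∈ S.insertShape x) :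
    S.insertEntry x i₁ j < S.insertEntry x i₂ j := by
  unfold insertEntry
  by_cases h₂ : i₂ ≤ S.stopRow x ∧ j = S.bumpCol x i₂
  · rw [if_pos h₂]
    have hval := strictMonoOn_bumpVal (S := S) (x := x) (hi.le.trans h₂.1 : i₁ ≤ _) h₂.1 hi
    split_ifs with h₁
    · exact hval
    · have hj : j < S.bumpCol x i₁ :=
        (h₂.2.trans_le (antitone_bumpCol hi.le)).lt_of_ne fun h' => h₁ ⟨by omega, h'⟩
      exact (mem_and_entry_le_of_lt_insertPos hj).2.trans_lt hval
  have hρ := mem_of_mem_insertShape h h₂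
  rw [if_neg h₂]
  split_ifs with h₁
  · have hρ₁ := ρ.up_left_mem hi.le le_rfl hρ
    rcases h₁.1.lt_or_eq with hi₁ | rfl
    · exact (entry_lt_of_lt_stopRow hi₁ h₁.2.ge hρ₁).trans (S.col_strict hi hρ)
    · exact absurd (lt_bumpCol_of_mem_stopRow hρ₁) (by omega)
  · exact S.col_strict hi hρ

theorem insertEntry_eq_zero {i j : ℕ} (h : (i, j) ∉ S.insertShape x) :
    S.insertEntry x i j = 0 := by
  unfold insertEntry
  rw [if_neg fun ⟨hi, hj⟩ => h (hj ▸ mem_insertShape_of_le_stopRow hi)]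
  exact S.zeros fun hρ => h (le_insertShape hρ)

variable (S x)

def rowInsert : SemistandardYoungTableau (S.insertShape x) where
  entry := S.insertEntry x
  row_weak' := insertEntry_row_weak
  col_strict' := insertEntry_col_strict
  zeros' := insertEntry_eq_zero

variable {S x}

theorem rowInsert_apply (i j : ℕ) : S.rowInsert x i j = S.insertEntry x i j := rfl

theorem rowInsert_bumpCol {i : ℕ} (h : i ≤ S.stopRow x) :
    S.rowInsert x i (S.bumpCol x i) = S.bumpVal x i := if_pos ⟨h, rfl⟩

theorem rowInsert_eq_self {i j : ℕ} (hρ : (i, j) ∈ ρ) (h : i < S.stopRow x → j ≠ S.bumpCol x i) :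
    S.rowInsert x i j = S i j := by
  refine if_neg fun ⟨hi, hj⟩ => ?_
  rcases hi.lt_or_eq with hi | rfl
  · exact h hi hj
  · exact (lt_bumpCol_of_mem_stopRow hρ).ne hj

/-- Along the bumping path each entry is replaced by the value one row above it, so the
multiset of entries gains exactly `x`. -/
theorem sum_rowInsert {M : Type*} [AddCommMonoid M] (f : ℕ → M) :
    ∑ c ∈ (S.insertShape x).cells, f (S.rowInsert x c.1 c.2) =
      ∑ c ∈ ρ.cells, f (S c.1 c.2) + f x := by
  set r := S.stopRow x
  set path := (range r).image fun i => (i, S.bumpCol x i)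
  have hpath : path ⊆ ρ.cells := by
    simp only [path, image_subset_iff, mem_range, mem_cells]
    exact fun i hi => bumpCol_mem hi
  have hinj : Set.InjOn (fun i => (i, S.bumpCol x i)) (range r) :=
    fun _ _ _ _ h => congrArg Prod.fst h
  have hoff : ∀ c ∈ ρ.cells \ path, S.rowInsert x c.1 c.2 = S c.1 c.2 := by
    rintro ⟨i, j⟩ hc
    simp only [path, mem_sdiff, mem_image, mem_range, Prod.mk.injEq, mem_cells,
      not_exists, not_and] at hc
    exact rowInsert_eq_self hc.1 fun hi hj => hc.2 i hi rfl hj.symm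
  have hcorner : (r, S.bumpCol x r) ∉ ρ.cells := fun h =>
    (lt_bumpCol_of_mem_stopRow ((mem_cells _).1 h)).false
  have hrest : ∑ c ∈ ρ.cells \ path, f (S.rowInsert x c.1 c.2) =
      ∑ c ∈ ρ.cells \ path, f (S c.1 c.2) :=
    sum_congr rfl fun c hc => by rw [hoff c hc]
  have hon : ∑ i ∈ range r, f (S.rowInsert x i (S.bumpCol x i)) =
      ∑ i ∈ range r, f (S.bumpVal x i) :=
    sum_congr rfl fun i hi => by rw [rowInsert_bumpCol (mem_range.1 hi).le]
  have htelescope := (sum_range_succ (fun i => f (S.bumpVal x i)) r).symm.trans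
    (sum_range_succ' (fun i => f (S.bumpVal x i)) r)
  change ∑ c ∈ insert (r, S.bumpCol x r) ρ.cells, _ = _
  rw [sum_insert hcorner, ← sum_sdiff hpath, ← sum_sdiff hpath, hrest, sum_image hinj,
    sum_image hinj, hon, rowInsert_bumpCol le_rfl]
  simp only [← bumpVal_succ, bumpVal_zero] at htelescope ⊢
  rw [add_assoc, ← htelescope]
  abel

theorem contentCount_rowInsert (v : ℕ) :
    contentCount (S.insertShape x) (S.rowInsert x) v =
      contentCount ρ S v + if x = v then 1 else 0 := by
  unfold contentCount
  rw [card_filter, card_filter]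
  exact sum_rowInsert fun w => if w = v then 1 else 0

theorem hasContent_rowInsert_iff {lam : List ℕ} :
    HasContent (S.rowInsert x) lam ↔
      x < lam.length ∧ 0 < lam.getD x 0 ∧ HasContent S (decAt lam x) := by
  simp only [HasContent, contentCount_rowInsert, forall_add_ite_eq_getD_iff]
  exact ⟨fun h => ⟨lt_length_of_getD_pos h.1, h⟩, And.right⟩

end RowInsertion

section RowDeletion

variable {μ : YoungDiagram} (T : SemistandardYoungTableau μ) (ρ : YoungDiagram)

/-- The reverse bumping path: the column of row `i` that receives the value ejected from
row `i + 1`, namely the last entry of row `i` of `ρ` smaller than it. -/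
def unbumpCol (i : ℕ) : ℕ :=
  if i < addedRow μ ρ then
    Nat.findGreatest (fun j => (i, j) ∈ ρ ∧ T i j < T (i + 1) (unbumpCol (i + 1))) (ρ.rowLen i)
  else addedCol μ ρ
termination_by addedRow μ ρ - i

def ejected : ℕ := T 0 (T.unbumpCol ρ 0)

def deleteEntry (i j : ℕ) : ℕ :=
  if (i, j) ∈ ρ then
    if i < addedRow μ ρ ∧ j = T.unbumpCol ρ i then T (i + 1) (T.unbumpCol ρ (i + 1)) else T i j
  else 0

variable {T ρ}

theorem unbumpCol_of_lt {i : ℕ} (h : i < addedRow μ ρ) :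
    T.unbumpCol ρ i = Nat.findGreatest
      (fun j => (i, j) ∈ ρ ∧ T i j < T (i + 1) (T.unbumpCol ρ (i + 1))) (ρ.rowLen i) := by
  rw [unbumpCol, if_pos h]

theorem unbumpCol_addedRow : T.unbumpCol ρ (addedRow μ ρ) = addedCol μ ρ := by
  rw [unbumpCol, if_neg (lt_irrefl _)]

section Deletion

variable (hle : ρ ≤ μ) (hcard : μ.card = ρ.card + 1)
include hle hcard

theorem unbumpCol_spec {i : ℕ} (hi : i < addedRow μ ρ)
    (hmem : (i + 1, T.unbumpCol ρ (i + 1)) ∈ μ) :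
    ((i, T.unbumpCol ρ i) ∈ ρ ∧ T i (T.unbumpCol ρ i) < T (i + 1) (T.unbumpCol ρ (i + 1))) ∧
      T.unbumpCol ρ (i + 1) ≤ T.unbumpCol ρ i ∧
      ∀ j, T.unbumpCol ρ i < j → (i, j) ∈ ρ → T (i + 1) (T.unbumpCol ρ (i + 1)) ≤ T i j := by
  set c := T.unbumpCol ρ (i + 1)
  have hρ : (i, c) ∈ ρ := (mem_iff_mem_and_ne_added hle hcard).2
    ⟨μ.up_left_mem (Nat.le_succ i) le_rfl hmem, fun he => hi.ne (congrArg Prod.fst he)⟩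
  have hc : c ≤ ρ.rowLen i := (mem_iff_lt_rowLen.1 hρ).le
  have hP : (i, c) ∈ ρ ∧ T i c < T (i + 1) c := ⟨hρ, T.col_strict (Nat.lt_succ_self i) hmem⟩
  rw [unbumpCol_of_lt hi]
  refine ⟨Nat.findGreatest_spec (P := fun j => (i, j) ∈ ρ ∧ T i j < T (i + 1) c) hc hP,
    Nat.le_findGreatest hc hP, fun j hj hjρ => not_lt.1 fun hlt => ?_⟩
  exact Nat.findGreatest_is_greatest hj (mem_iff_lt_rowLen.1 hjρ).le ⟨hjρ, hlt⟩

theorem unbumpCol_mem_of_le {i : ℕ} (hi : i ≤ addedRow μ ρ) : (i, T.unbumpCol ρ i) ∈ μ := by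
  induction hi using Nat.decreasingInduction with
  | self => rw [unbumpCol_addedRow]; exact added_mem hle hcard
  | of_succ k hk ih => exact hle (unbumpCol_spec hle hcard hk ih).1.1

theorem unbumpCol_mem {i : ℕ} (hi : i < addedRow μ ρ) : (i, T.unbumpCol ρ i) ∈ ρ :=
  (unbumpCol_spec hle hcard hi (unbumpCol_mem_of_le hle hcard hi)).1.1

theorem entry_unbumpCol_lt_succ {i : ℕ} (hi : i < addedRow μ ρ) :
    T i (T.unbumpCol ρ i) < T (i + 1) (T.unbumpCol ρ (i + 1)) :=
  (unbumpCol_spec hle hcard hi (unbumpCol_mem_of_le hle hcard hi)).1.2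

theorem le_entry_of_unbumpCol_lt {i j : ℕ} (hi : i < addedRow μ ρ) (hj : T.unbumpCol ρ i < j)
    (hjρ : (i, j) ∈ ρ) : T (i + 1) (T.unbumpCol ρ (i + 1)) ≤ T i j :=
  (unbumpCol_spec hle hcard hi (unbumpCol_mem_of_le hle hcard hi)).2.2 j hj hjρ

theorem antitoneOn_unbumpCol : AntitoneOn (T.unbumpCol ρ) (Set.Iic (addedRow μ ρ)) :=
  antitoneOn_of_succ_le Set.ordConnected_Iic fun _ _ _ h =>
    (unbumpCol_spec hle hcard (Order.succ_le_iff.1 h)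
      (unbumpCol_mem_of_le hle hcard h)).2.1

theorem strictMonoOn_entry_unbumpCol :
    StrictMonoOn (fun i => T i (T.unbumpCol ρ i)) (Set.Iic (addedRow μ ρ)) :=
  strictMonoOn_Iic_of_lt_succ fun _ h => entry_unbumpCol_lt_succ hle hcard h

theorem deleteEntry_row_weak {i j₁ j₂ : ℕ} (hj : j₁ < j₂) (h : (i, j₂) ∈ ρ) :
    T.deleteEntry ρ i j₁ ≤ T.deleteEntry ρ i j₂ := by
  unfold deleteEntry
  rw [if_pos h, if_pos (ρ.up_left_mem le_rfl hj.le h)]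
  by_cases h₂ : i < addedRow μ ρ ∧ j₂ = T.unbumpCol ρ i
  · rw [if_pos h₂, if_neg (by omega)]
    exact (T.row_weak_of_le (h₂.2 ▸ hj.le) (hle (h₂.2 ▸ h))).trans_lt
      (entry_unbumpCol_lt_succ hle hcard h₂.1) |>.le
  rw [if_neg h₂]
  split_ifs with h₁
  · exact le_entry_of_unbumpCol_lt hle hcard h₁.1 (h₁.2 ▸ hj) h
  · exact T.row_weak hj (hle h)

theorem deleteEntry_col_strict {i₁ i₂ j : ℕ} (hi : i₁ < i₂) (h : (i₂, j) ∈ ρ) :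
    T.deleteEntry ρ i₁ j < T.deleteEntry ρ i₂ j := by
  have hmono := strictMonoOn_entry_unbumpCol (T := T) hle hcard
  have hanti := antitoneOn_unbumpCol (T := T) hle hcard
  unfold deleteEntry
  rw [if_pos h, if_pos (ρ.up_left_mem hi.le le_rfl h)]
  by_cases h₂ : i₂ < addedRow μ ρ ∧ j = T.unbumpCol ρ i₂
  · rw [if_pos h₂]
    split_ifs with h₁
    · exact hmono (show i₁ + 1 ≤ _ by omega) (show i₂ + 1 ≤ _ by omega) (by omega)
    · exact (T.col_strict hi (hle h)).trans
        (h₂.2 ▸ entry_unbumpCol_lt_succ hle hcard h₂.1 : T i₂ j < _)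
  rw [if_neg h₂]
  split_ifs with h₁
  · have hi₂ : i₂ < addedRow μ ρ := not_le.1 fun hr => by
      have := (mem_iff_lt_rowLen.1 h).trans_le (ρ.rowLen_anti _ _ hr)
      rw [rowLen_addedRow hle hcard, ← unbumpCol_addedRow (T := T), h₁.2] at this
      exact this.not_ge (hanti (show i₁ ≤ _ from h₁.1.le) (le_refl (addedRow μ ρ)) h₁.1.le)
    have hj : T.unbumpCol ρ i₂ < j :=
      (h₁.2 ▸ hanti (show i₁ ≤ _ from h₁.1.le) hi₂.le hi.le).lt_of_ne fun he => h₂ ⟨hi₂, he.symm⟩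
    exact (hmono (show i₁ + 1 ≤ _ by omega) (show i₂ + 1 ≤ _ by omega) (by omega)).trans_le
      (le_entry_of_unbumpCol_lt hle hcard hi₂ hj h)
  · exact T.col_strict hi (hle h)

variable (T) in
/-- Reverse row insertion: removes the cell `μ \ ρ`, bumping its entry up along the reverse
path; the value leaving the top row is `T.ejected ρ`. -/
def rowDelete : SemistandardYoungTableau ρ where
  entry := T.deleteEntry ρ
  row_weak' := deleteEntry_row_weak hle hcard
  col_strict' := deleteEntry_col_strict hle hcard
  zeros' h := if_neg h

theorem rowDelete_apply (i j : ℕ) : T.rowDelete hle hcard i j = T.deleteEntry ρ i j := rfl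

end Deletion

end RowDeletion

section InsertDelete

variable {μ ρ : YoungDiagram} {T : SemistandardYoungTableau μ}
variable (hle : ρ ≤ μ) (hcard : μ.card = ρ.card + 1)
include hle hcard

theorem insertPos_rowDelete {i : ℕ} (hi : i ≤ addedRow μ ρ) :
    (T.rowDelete hle hcard).insertPos i (T i (T.unbumpCol ρ i)) = T.unbumpCol ρ i := by
  refine le_antisymm ?_ (le_insertPos_iff.2 fun j hj => ?_)
  · rcases hi.lt_or_eq with hi | rfl
    · refine insertPos_le ?_
      rw [rowDelete_apply, deleteEntry, if_pos (unbumpCol_mem hle hcard hi), if_pos ⟨hi, rfl⟩]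
      exact entry_unbumpCol_lt_succ hle hcard hi
    · exact (insertPos_le_rowLen _ _).trans_eq
        ((rowLen_addedRow hle hcard).trans unbumpCol_addedRow.symm)
  have hμ := unbumpCol_mem_of_le (T := T) hle hcard hi
  have hρ : (i, j) ∈ ρ := (mem_iff_mem_and_ne_added hle hcard).2
    ⟨μ.up_left_mem le_rfl hj.le hμ, fun he => by
      simp only [Prod.mk.injEq] at he
      rw [he.1, unbumpCol_addedRow] at hj
      exact hj.ne he.2⟩
  refine ⟨hρ, ?_⟩
  rw [rowDelete_apply, deleteEntry, if_pos hρ, if_neg fun h => hj.ne h.2]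
  exact T.row_weak_of_le hj.le hμ

theorem bumpVal_bumpCol_rowDelete {i : ℕ} (hi : i ≤ addedRow μ ρ) :
    (T.rowDelete hle hcard).bumpVal (T.ejected ρ) i = T i (T.unbumpCol ρ i) ∧
      (T.rowDelete hle hcard).bumpCol (T.ejected ρ) i = T.unbumpCol ρ i := by
  induction i with
  | zero => exact ⟨rfl, insertPos_rowDelete hle hcard hi⟩
  | succ i ih =>
    have hval : (T.rowDelete hle hcard).bumpVal (T.ejected ρ) (i + 1) =
        T (i + 1) (T.unbumpCol ρ (i + 1)) := by
      have hi' : i < addedRow μ ρ := hi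
      rw [bumpVal_succ, (ih hi'.le).2, rowDelete_apply, deleteEntry,
        if_pos (unbumpCol_mem hle hcard hi'), if_pos ⟨hi', rfl⟩]
    exact ⟨hval, by rw [bumpCol, hval, insertPos_rowDelete hle hcard hi]⟩

theorem stopRow_rowDelete : (T.rowDelete hle hcard).stopRow (T.ejected ρ) = addedRow μ ρ := by
  rw [stopRow, Nat.find_eq_iff, (bumpVal_bumpCol_rowDelete hle hcard le_rfl).2,
    unbumpCol_addedRow, mem_iff_mem_and_ne_added hle hcard]
  refine ⟨fun h => h.2 rfl, fun i hi => ?_⟩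
  rw [(bumpVal_bumpCol_rowDelete hle hcard hi.le).2, not_not]
  exact unbumpCol_mem hle hcard hi

theorem insertShape_rowDelete : (T.rowDelete hle hcard).insertShape (T.ejected ρ) = μ := by
  refine YoungDiagram.ext ((cells_eq_insert_added hle hcard).trans ?_).symm
  change _ = insert _ ρ.cells
  rw [stopRow_rowDelete, (bumpVal_bumpCol_rowDelete hle hcard le_rfl).2, unbumpCol_addedRow]

theorem rowInsert_rowDelete_apply (i j : ℕ) :
    (T.rowDelete hle hcard).rowInsert (T.ejected ρ) i j = T i j := by
  rw [rowInsert_apply, insertEntry, stopRow_rowDelete]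
  by_cases hpath : i ≤ addedRow μ ρ ∧ j = T.unbumpCol ρ i
  · rw [(bumpVal_bumpCol_rowDelete hle hcard hpath.1).2, if_pos hpath,
      (bumpVal_bumpCol_rowDelete hle hcard hpath.1).1, hpath.2]
  have hpath' : ¬(i ≤ addedRow μ ρ ∧
      j = (T.rowDelete hle hcard).bumpCol (T.ejected ρ) i) := fun h =>
    hpath ⟨h.1, h.2.trans (bumpVal_bumpCol_rowDelete hle hcard h.1).2⟩
  rw [if_neg hpath', rowDelete_apply, deleteEntry]
  split_ifs with hρ h
  · exact absurd ⟨h.1.le, h.2⟩ hpath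
  · rfl
  · refine (T.zeros fun hμ => hρ ((mem_iff_mem_and_ne_added hle hcard).2 ⟨hμ, ?_⟩)).symm
    rintro ⟨⟩
    exact hpath ⟨le_rfl, unbumpCol_addedRow.symm⟩

theorem rowInsert_rowDelete :
    (⟨_, (T.rowDelete hle hcard).rowInsert (T.ejected ρ)⟩ : Σ ν, SemistandardYoungTableau ν) =
      ⟨μ, T⟩ :=
  sigma_ext (insertShape_rowDelete hle hcard) (rowInsert_rowDelete_apply hle hcard)

end InsertDelete

section DeleteInsert

variable {ρ : YoungDiagram} {S : SemistandardYoungTableau ρ} {x : ℕ}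

theorem added_insertShape :
    (addedRow (S.insertShape x) ρ, addedCol (S.insertShape x) ρ) =
      (S.stopRow x, S.bumpCol x (S.stopRow x)) :=
  addedRow_addedCol_of_cells_sdiff <| insert_sdiff_cancel fun h =>
    (lt_bumpCol_of_mem_stopRow ((mem_cells _).1 h)).false

theorem addedRow_insertShape : addedRow (S.insertShape x) ρ = S.stopRow x :=
  congrArg Prod.fst added_insertShape

theorem unbumpCol_rowInsert {i : ℕ} (hi : i ≤ S.stopRow x) :
    (S.rowInsert x).unbumpCol ρ i = S.bumpCol x i := by
  induction hi using Nat.decreasingInduction with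
  | self =>
    rw [← addedRow_insertShape, unbumpCol_addedRow, addedRow_insertShape]
    exact congrArg Prod.snd added_insertShape
  | of_succ k hk ih =>
    have hk' : k < addedRow (S.insertShape x) ρ := addedRow_insertShape ▸ hk
    have hspec := unbumpCol_spec le_insertShape card_insertShape hk'
      (ih ▸ mem_insertShape_of_le_stopRow hk)
    rw [ih, rowInsert_bumpCol hk] at hspec
    obtain ⟨⟨hmem, hlt⟩, -, hmax⟩ := hspec
    refine le_antisymm (not_lt.1 fun h => ?_) (not_lt.1 fun h => ?_)
    · rw [rowInsert_eq_self hmem fun _ => h.ne'] at hlt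
      exact (S.row_weak_of_le h.le hmem).not_gt hlt
    · have := hmax _ h (bumpCol_mem hk)
      rw [rowInsert_bumpCol hk.le] at this
      exact (bumpVal_lt_bumpVal_succ hk).not_ge this

theorem ejected_rowInsert : (S.rowInsert x).ejected ρ = x := by
  rw [ejected, unbumpCol_rowInsert (Nat.zero_le _), rowInsert_bumpCol (Nat.zero_le _),
    bumpVal_zero]

theorem rowDelete_rowInsert :
    (S.rowInsert x).rowDelete le_insertShape card_insertShape = S := by
  ext i j
  rw [rowDelete_apply, deleteEntry, addedRow_insertShape]
  split_ifs with hρ hpath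
  · rw [hpath.2, unbumpCol_rowInsert hpath.1.le, unbumpCol_rowInsert hpath.1,
      rowInsert_bumpCol hpath.1, bumpVal_succ]
  · exact rowInsert_eq_self hρ fun hi hj => hpath ⟨hi, hj.trans (unbumpCol_rowInsert hi.le).symm⟩
  · exact (S.zeros hρ).symm

end DeleteInsert

def rowInsertEquiv (ρ : YoungDiagram) :
    ℕ × SemistandardYoungTableau ρ ≃
      {p : Σ μ, SemistandardYoungTableau μ // ρ ≤ p.1 ∧ p.1.card = ρ.card + 1} where
  toFun q := ⟨⟨_, q.2.rowInsert q.1⟩, le_insertShape, card_insertShape⟩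
  invFun p := (p.1.2.ejected ρ, p.1.2.rowDelete p.2.1 p.2.2)
  left_inv _ := Prod.ext ejected_rowInsert rowDelete_rowInsert
  right_inv := fun ⟨⟨_, _⟩, hle, hcard⟩ => Subtype.ext (rowInsert_rowDelete hle hcard)

end SemistandardYoungTableau

theorem card_pairs_eq_general (n : ℕ) (lam : List ℕ) (ρ : YoungDiagram)
    (hρ : ρ.card + 1 = n) :
    Nat.card {p : Σ μ : YoungDiagram, SemistandardYoungTableau μ //
        p.1.card = n ∧ ρ ≤ p.1 ∧ HasContent p.2 lam} =
      Nat.card {q : ℕ × SemistandardYoungTableau ρ //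
        q.1 < lam.length ∧ 0 < lam.getD q.1 0 ∧ HasContent q.2 (decAt lam q.1)} := by
  subst hρ
  refine (Nat.card_congr ?_).symm
  refine ((SemistandardYoungTableau.rowInsertEquiv ρ).subtypeEquiv
    (q := fun p => HasContent p.1.2 lam)
    fun _ => SemistandardYoungTableau.hasContent_rowInsert_iff.symm).trans ?_
  exact (Equiv.subtypeSubtypeEquivSubtypeInter (fun p : Σ μ, SemistandardYoungTableau μ =>
    ρ ≤ p.1 ∧ p.1.card = ρ.card + 1) (fun p => HasContent p.2 lam)).trans
    (Equiv.subtypeEquivRight fun _ => by tauto)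

/-- **The cardinality identity underlying the insertion bijection.**  For partitions
`ρ ⊢ n - 1` and `lam ⊢ n`, the number of pairs `(μ, T)` with `μ ⊢ n`, `ρ ⪯ μ` and
`T ∈ SSYT(μ, lam)` equals the number of pairs `(x, S)` with `x < length lam`,
`λ_x ≥ 1` and `S ∈ SSYT(ρ, λ^{(x)})`.  (Indices are 0-based.) -/
theorem card_pairs_eq (n : ℕ) (lam : List ℕ) (ρ : YoungDiagram)
    (hlam : IsPartitionList lam) (hn : lam.sum = n) (hρ : ρ.card + 1 = n) :
    Nat.card {p : Σ μ : YoungDiagram, SemistandardYoungTableau μ //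
        p.1.card = n ∧ ρ ≤ p.1 ∧ HasContent p.2 lam} =
      Nat.card {q : ℕ × SemistandardYoungTableau ρ //
        q.1 < lam.length ∧ 0 < lam.getD q.1 0 ∧ HasContent q.2 (decAt lam q.1)} :=
  card_pairs_eq_general n lam ρ hρ
end
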